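/- arXiv:1708.07042 — 8 statements merged into one kernel-verified Lean document; each statement's English description precedes it below -/
import Mathlib

section
/- For all real x, it holds that x + e^{-x} ≤ e^{(9/16) x²}. -/
theorem stmt_0 : ∀ x : ℝ, x + Real.exp (-x) ≤ Real.exp ((9 / 16) * x ^ 2) := by
  intro x
  rcases le_or_gt 0 x with hx | hx
  · -- x ≥ 0 : exp(-x) ≤ 1 - x + x²/2, then 1 + x²/2 ≤ exp((9/16)x²)
    have hq : 1 + x + x ^ 2 / 2 ≤ Real.exp x := Real.quadratic_le_exp_of_nonneg hx
    have hmul : Real.exp (-x) * Real.exp x = 1 := by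
      rw [← Real.exp_add]; simp
    have hpos : 0 < Real.exp (-x) := Real.exp_pos _
    have hneg : Real.exp (-x) ≤ 1 - x + x ^ 2 / 2 := by
      nlinarith [sq_nonneg (x ^ 2), sq_nonneg x]
    have hfin : 1 + 9 / 16 * x ^ 2 ≤ Real.exp (9 / 16 * x ^ 2) :=
      Real.add_one_le_exp _ |>.trans_eq' (by ring_nf)
    nlinarith [sq_nonneg x]
  · rcases le_or_gt x (-(16/9)) with hx2 | hx2
    · -- very negative x : -x ≤ (9/16)x²
      have h1 : -x ≤ 9 / 16 * x ^ 2 := by nlinarith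
      have := Real.exp_le_exp.2 h1
      linarith
    · -- -16/9 < x < 0, set y = -x
      set y : ℝ := -x with hy
      have h0 : 0 ≤ y := by simp [hy]; linarith
      have h1 : y ≤ 16 / 9 := by simp [hy]; linarith
      have hb : Real.exp (y / 2) ≤
          1 + y/2 + y^2/8 + y^3/48 + y^4/384 + y^5/3840 + 7*y^6/276480 := by
        have hb := Real.exp_bound' (x := y/2) (by linarith) (by linarith) (n := 6) (by norm_num)
        simp [Finset.sum_range_succ, Nat.factorial] at hb
        nlinarith [hb]
      have hE : Real.exp y = Real.exp (y / 2) * Real.exp (y / 2) := by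
        rw [← Real.exp_add]; ring_nf
      have hEle : Real.exp y ≤
          (1 + y/2 + y^2/8 + y^3/48 + y^4/384 + y^5/3840 + 7*y^6/276480) ^ 2 := by
        rw [hE, ← sq]
        have := (Real.exp_pos (y / 2)).le
        exact pow_le_pow_left₀ this hb 2
      have ht : (0:ℝ) ≤ 9 / 16 * y ^ 2 := by positivity
      have hlow : 1 + (9/16*y^2) + (9/16*y^2)^2/2 + (9/16*y^2)^3/6 ≤
          Real.exp (9/16*y^2) := by
        have := Real.sum_le_exp_of_nonneg ht 4
        simp [Finset.sum_range_succ, Nat.factorial] at this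
        nlinarith [this]
      have hpoly : (1 + y/2 + y^2/8 + y^3/48 + y^4/384 + y^5/3840 + 7*y^6/276480)^2 - y ≤
          1 + (9/16*y^2) + (9/16*y^2)^2/2 + (9/16*y^2)^3/6 := by
        nlinarith [sq_nonneg (y - 0.635), sq_nonneg y, mul_nonneg h0 h0,
          sq_nonneg (y*(y-0.635)), mul_nonneg (mul_nonneg h0 h0) h0,
          mul_nonneg h0 (sq_nonneg (y - 0.635)), sq_nonneg (y^2*(y-0.635)),
          sq_nonneg (y^3*(y-0.635)), sq_nonneg (y^4*(y-0.635)),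
          mul_nonneg (mul_nonneg h0 h0) (sq_nonneg (y-0.635)), sub_nonneg.2 h1]
      have hx2y : x ^ 2 = y ^ 2 := by simp [hy]
      have hxy : x = -y := by simp [hy]
      have harg : (9:ℝ) / 16 * x ^ 2 = 9 / 16 * y ^ 2 := by rw [hx2y]
      rw [harg]
      have hgoal : -y + Real.exp y ≤ Real.exp (9 / 16 * y ^ 2) := by
        calc -y + Real.exp y
            ≤ 1 + (9/16*y^2) + (9/16*y^2)^2/2 + (9/16*y^2)^3/6 := by linarith
          _ ≤ Real.exp (9/16*y^2) := hlow
      linarith [hgoal]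
end

section
/- Let f : [0,∞) → ℝ be defined by f(x) = x·√(α·log(1 + α β² x²)) where α, β > 0. Then the Fenchel conjugate f*(θ) = sup_{x ≥ 0} (θx − f(x)) satisfies f*(θ) ≤ (1/β)·e^{θ²/(2α)} for all θ ≥ 0. -/
/-!
Write `t = √(log (1 + αβ²x²))` and `s = θ/√α`. Then `θx − f x = √α x (s − t)` and
`√α β x ≤ √(1 + αβ²x²) = e^{t²/2}`, so everything reduces to the elementary
`s − t ≤ e^{(s² − t²)/2}` for `t ≥ 0`, after which the factors `e^{±t²/2}` cancel.
-/

open Real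

lemma sub_le_exp_sq_sub_sq_div_two {s t : ℝ} (ht : 0 ≤ t) :
    s - t ≤ exp ((s ^ 2 - t ^ 2) / 2) := by
  rcases le_or_gt s t with hst | hts
  · linarith [exp_pos ((s ^ 2 - t ^ 2) / 2)]
  -- `y ≤ 1 + y²/2 ≤ exp (y²/2)` with `y = s - t`, and `(s - t)² ≤ s² - t²` since `0 ≤ t < s`
  calc s - t ≤ 1 + (s - t) ^ 2 / 2 := by nlinarith [sq_nonneg (s - t - 1)]
    _ ≤ exp ((s - t) ^ 2 / 2) := by linarith [add_one_le_exp ((s - t) ^ 2 / 2)]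
    _ ≤ exp ((s ^ 2 - t ^ 2) / 2) := exp_le_exp.mpr (by nlinarith)

lemma le_exp_log_one_add_sq_div_two (y : ℝ) : y ≤ exp (log (1 + y ^ 2) / 2) := by
  have hsq : exp (log (1 + y ^ 2) / 2) ^ 2 = 1 + y ^ 2 := by
    rw [← exp_nat_mul, exp_eq_exp.mpr (by ring : (2 : ℕ) * (log (1 + y ^ 2) / 2) = log (1 + y ^ 2)),
      exp_log (by positivity)]
  nlinarith [exp_pos (log (1 + y ^ 2) / 2)]

lemma mul_sub_mul_sqrt_log_le {α β : ℝ} (hα : 0 < α) (hβ : 0 < β) {x : ℝ} (hx : 0 ≤ x) (θ : ℝ) :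
    θ * x - x * √(α * log (1 + α * β ^ 2 * x ^ 2)) ≤ 1 / β * exp (θ ^ 2 / (2 * α)) := by
  set L := log (1 + α * β ^ 2 * x ^ 2)
  have hL : 0 ≤ L := log_nonneg (by nlinarith [mul_nonneg (mul_nonneg hα.le (sq_nonneg β)) (sq_nonneg x)])
  have hsα : √α ^ 2 = α := sq_sqrt hα.le
  have hy : √α * β * x ≤ exp (L / 2) := by
    simpa [L, mul_pow, hsα] using le_exp_log_one_add_sq_div_two (√α * β * x)
  have hst := sub_le_exp_sq_sub_sq_div_two (s := θ / √α) (sqrt_nonneg L)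
  rw [div_pow, hsα, sq_sqrt hL] at hst
  calc θ * x - x * √(α * L) = √α * x * (θ / √α - √L) := by
        rw [sqrt_mul hα.le]; field_simp
    _ ≤ √α * x * exp ((θ ^ 2 / α - L) / 2) := by gcongr
    _ = 1 / β * (√α * β * x) * exp ((θ ^ 2 / α - L) / 2) := by field_simp
    _ ≤ 1 / β * exp (L / 2) * exp ((θ ^ 2 / α - L) / 2) := by gcongr
    _ = 1 / β * exp (θ ^ 2 / (2 * α)) := by
        rw [mul_assoc, ← exp_add]; congr 2; field_simp; ring

theorem stmt_3_general (α β : ℝ) (hα : 0 < α) (hβ : 0 < β)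
    (f : ℝ → ℝ) (hf : ∀ x, f x = x * Real.sqrt (α * Real.log (1 + α * β ^ 2 * x ^ 2)))
    (θ : ℝ) :
    (⨆ x : {x : ℝ // 0 ≤ x}, (θ * x.1 - f x.1)) ≤ (1 / β) * Real.exp (θ ^ 2 / (2 * α)) :=
  ciSup_le fun ⟨x, hx⟩ => (hf x).symm ▸ mul_sub_mul_sqrt_log_le hα hβ hx θ

theorem stmt_3 (α β : ℝ) (hα : 0 < α) (hβ : 0 < β)
    (f : ℝ → ℝ) (hf : ∀ x, f x = x * Real.sqrt (α * Real.log (1 + α * β ^ 2 * x ^ 2)))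
    (θ : ℝ) (hθ : 0 ≤ θ) :
    (⨆ x : {x : ℝ // 0 ≤ x}, (θ * x.1 - f x.1)) ≤ (1 / β) * Real.exp (θ ^ 2 / (2 * α)) :=
  stmt_3_general α β hα hβ f hf θ
end

section
/- For positive semi-definite S (being a sum of outer products Σ_t x_t x_tᵀ) and vectors x_i, x_j in the range of S, and any invertible d×d matrix A: x_iᵀ Aᵀ (A S Aᵀ)† A x_j = x_iᵀ S† x_j, where † denotes the Moore–Penrose pseudoinverse. -/
open Matrix

/-- `Sd` is the Moore–Penrose pseudoinverse of `S`. -/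
def IsMoorePenroseInv {d : ℕ} (S Sd : Matrix (Fin d) (Fin d) ℝ) : Prop :=
  S * Sd * S = S ∧ Sd * S * Sd = Sd ∧ (S * Sd)ᵀ = S * Sd ∧ (Sd * S)ᵀ = Sd * S

lemma key_aux {d : ℕ} (N Nd : Matrix (Fin d) (Fin d) ℝ) (hN : Nᵀ = N)
    (h : N * Nd * N = N) (a b : Fin d → ℝ) :
    (N.mulVec a) ⬝ᵥ Nd.mulVec (N.mulVec b) = a ⬝ᵥ N.mulVec b := by
  have h1 : N.mulVec a = Nᵀ.mulVec a := by rw [hN]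
  rw [h1, mulVec_transpose, mulVec_mulVec, ← dotProduct_mulVec, mulVec_mulVec,
    ← Matrix.mul_assoc, h]

theorem stmt_7 (d T : ℕ) (x : Fin T → Fin d → ℝ)
    (S Sd A Md : Matrix (Fin d) (Fin d) ℝ)
    (hS : S = ∑ t, vecMulVec (x t) (x t))
    (hSd : IsMoorePenroseInv S Sd)
    (hA : IsUnit A)
    (hMd : IsMoorePenroseInv (A * S * Aᵀ) Md)
    (xi xj : Fin d → ℝ)
    (hxi : ∃ z, S.mulVec z = xi) (hxj : ∃ z, S.mulVec z = xj) :
    A.mulVec xi ⬝ᵥ Md.mulVec (A.mulVec xj) = xi ⬝ᵥ Sd.mulVec xj := by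
  obtain ⟨zi, hzi⟩ := hxi
  obtain ⟨zj, hzj⟩ := hxj
  have hSsym : Sᵀ = S := by
    subst hS
    ext i k
    simp [Matrix.sum_apply, vecMulVec_apply, mul_comm]
  set M := A * S * Aᵀ with hM
  have hMsym : Mᵀ = M := by
    simp [hM, Matrix.transpose_mul, hSsym, Matrix.mul_assoc]
  have hAinv : A * A⁻¹ = 1 := Matrix.mul_nonsing_inv A (isUnit_iff_isUnit_det A |>.mp hA)
  have hAinv' : A⁻¹ * A = 1 := Matrix.nonsing_inv_mul A (isUnit_iff_isUnit_det A |>.mp hA)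
  -- A xi = M ((A⁻¹)ᵀ zi)
  have hlift : ∀ z : Fin d → ℝ, A.mulVec (S.mulVec z) = M.mulVec ((A⁻¹)ᵀ.mulVec z) := by
    intro z
    simp only [hM, mulVec_mulVec, ← Matrix.mul_assoc]
    congr 1
    rw [Matrix.mul_assoc (A*S), ← Matrix.transpose_mul, hAinv', transpose_one, Matrix.mul_one]
  rw [← hzi, ← hzj, hlift, hlift, key_aux M Md hMsym hMd.1]
  rw [key_aux S Sd hSsym hSd.1 zi zj]
  rw [mulVec_transpose, ← dotProduct_mulVec, hM, mulVec_mulVec, mulVec_mulVec]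
  congr 1
  have : Aᵀ * A⁻¹ᵀ = 1 := by rw [← Matrix.transpose_mul, hAinv', transpose_one]
  congr 1
  rw [show A⁻¹ * (A * S * Aᵀ) * A⁻¹ᵀ = (A⁻¹ * A) * S * (Aᵀ * A⁻¹ᵀ) by noncomm_ring,
    hAinv', this, Matrix.one_mul, Matrix.mul_one]
end

section
/- Let S be a positive semi-definite d×d matrix, x ∈ ℝ^d with x ∈ range(S), and let S' = S + x xᵀ. Then S'† = S† − (1/β) S† x xᵀ S† where β = 1 + xᵀ S† x. -/
open Matrix

theorem Matrix.isSymm_vecMulVec_self {n α : Type*} [CommMagma α] (x : n → α) :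
    (vecMulVec x x).IsSymm :=
  transpose_vecMulVec x x

theorem Matrix.IsSymm.mul_vecMulVec_mul {n α : Type*} [Fintype n] [CommSemiring α]
    {M : Matrix n n α} (hM : M.IsSymm) (x y : n → α) :
    M * vecMulVec x y * M = vecMulVec (M *ᵥ x) (M *ᵥ y) := by
  rw [mul_vecMulVec, vecMulVec_mul, ← mulVec_transpose, hM.eq]

namespace IsMoorePenroseInv

variable {d : ℕ} {S Sd : Matrix (Fin d) (Fin d) ℝ}

theorem transpose (h : IsMoorePenroseInv S Sd) : IsMoorePenroseInv Sᵀ Sdᵀ := by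
  obtain ⟨h₁, h₂, h₃, h₄⟩ := h
  refine ⟨?_, ?_, ?_, ?_⟩
  · rw [← transpose_mul, ← transpose_mul, ← Matrix.mul_assoc, h₁]
  · rw [← transpose_mul, ← transpose_mul, ← Matrix.mul_assoc, h₂]
  · rw [← transpose_mul, transpose_transpose, h₄]
  · rw [← transpose_mul, transpose_transpose, h₃]

theorem self_mul_eq {A B : Matrix (Fin d) (Fin d) ℝ} (hA : IsMoorePenroseInv S A)
    (hB : IsMoorePenroseInv S B) : S * A = S * B := by
  have hBA : S * B * (S * A) = S * A := by rw [← Matrix.mul_assoc, hB.1]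
  have hAB : S * A * (S * B) = S * B := by rw [← Matrix.mul_assoc, hA.1]
  calc S * A = (S * B * (S * A))ᵀ := by rw [hBA, hA.2.2.1]
    _ = S * A * (S * B) := by rw [transpose_mul, hA.2.2.1, hB.2.2.1]
    _ = S * B := hAB

theorem unique {A B : Matrix (Fin d) (Fin d) ℝ} (hA : IsMoorePenroseInv S A)
    (hB : IsMoorePenroseInv S B) : A = B := by
  have hSA : S * A = S * B := self_mul_eq hA hB
  have hAS : A * S = B * S := by
    simpa only [← transpose_mul, transpose_inj] using self_mul_eq hA.transpose hB.transpose
  calc A = A * S * A := hA.2.1.symm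
    _ = B * (S * B) := by rw [hAS, Matrix.mul_assoc, hSA]
    _ = B := by rw [← Matrix.mul_assoc, hB.2.1]

theorem isSymm (hS : S.IsSymm) (h : IsMoorePenroseInv S Sd) : Sd.IsSymm :=
  unique (hS.eq ▸ h.transpose) h

theorem mul_comm_of_isSymm (hS : S.IsSymm) (h : IsMoorePenroseInv S Sd) : S * Sd = Sd * S := by
  rw [← h.2.2.1, transpose_mul, (h.isSymm hS).eq, hS.eq]

theorem mulVec_mulVec_of_mem_range (h : IsMoorePenroseInv S Sd) {x : Fin d → ℝ}
    (hx : ∃ z, S *ᵥ z = x) : S *ᵥ (Sd *ᵥ x) = x := by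
  obtain ⟨z, rfl⟩ := hx
  rw [mulVec_mulVec, mulVec_mulVec, h.1]

theorem posSemidef (hS : S.PosSemidef) (h : IsMoorePenroseInv S Sd) : Sd.PosSemidef := by
  have hSdS := hS.conjTranspose_mul_mul_same Sd
  have hSd := h.isSymm (isHermitian_iff_isSymm.mp hS.1)
  rwa [conjTranspose_eq_transpose_of_trivial, hSd.eq, h.2.1] at hSdS

theorem add_vecMulVec_mul_sub (hS : S.IsSymm) (h : IsMoorePenroseInv S Sd) {x : Fin d → ℝ}
    (hx : S *ᵥ (Sd *ᵥ x) = x) (hβ : 1 + x ⬝ᵥ Sd *ᵥ x ≠ 0) :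
    (S + vecMulVec x x) *
        (Sd - (1 / (1 + x ⬝ᵥ Sd *ᵥ x)) • vecMulVec (Sd *ᵥ x) (Sd *ᵥ x)) = S * Sd := by
  -- With `u = Sd *ᵥ x` and `S *ᵥ u = x`, every cross term is a multiple of `vecMulVec x u`,
  -- and the coefficients `1 - c - c * (x ⬝ᵥ u)` cancel for `c = 1 / (1 + x ⬝ᵥ u)`.
  have hc : 1 / (1 + x ⬝ᵥ Sd *ᵥ x) * (x ⬝ᵥ Sd *ᵥ x) = 1 - 1 / (1 + x ⬝ᵥ Sd *ᵥ x) := by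
    field_simp
    ring
  rw [add_mul, mul_sub, mul_sub, Matrix.mul_smul, Matrix.mul_smul, mul_vecMulVec, hx,
    vecMulVec_mul, ← mulVec_transpose, (h.isSymm hS).eq, vecMulVec_mul_vecMulVec, vecMulVec_smul,
    smul_smul, hc, sub_smul, one_smul]
  abel

theorem add_vecMulVec (hS : S.IsSymm) (h : IsMoorePenroseInv S Sd) {x : Fin d → ℝ}
    (hx : ∃ z, S *ᵥ z = x) (hβ : 1 + x ⬝ᵥ Sd *ᵥ x ≠ 0) :
    IsMoorePenroseInv (S + vecMulVec x x)
      (Sd - (1 / (1 + x ⬝ᵥ Sd *ᵥ x)) • (Sd * vecMulVec x x * Sd)) := by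
  have hSd := h.isSymm hS
  have hSSdx := h.mulVec_mulVec_of_mem_range hx
  rw [hSd.mul_vecMulVec_mul]
  have hS'T := h.add_vecMulVec_mul_sub hS hSSdx hβ
  have hTS' : (Sd - (1 / (1 + x ⬝ᵥ Sd *ᵥ x)) • vecMulVec (Sd *ᵥ x) (Sd *ᵥ x)) *
      (S + vecMulVec x x) = Sd * S := by
    -- both factors are symmetric, so this is the transpose of `hS'T`
    rw [← (hSd.sub ((isSymm_vecMulVec_self _).smul _)).eq, ← (hS.add (isSymm_vecMulVec_self x)).eq,
      ← transpose_mul, hS'T, h.2.2.1, h.mul_comm_of_isSymm hS]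
  refine ⟨?_, ?_, ?_, ?_⟩
  · rw [hS'T, mul_add, h.1, mul_vecMulVec, ← mulVec_mulVec, hSSdx]
  · rw [hTS', mul_sub, h.2.1, Matrix.mul_smul, mul_vecMulVec, ← mulVec_mulVec, hSSdx]
  · rw [hS'T, h.2.2.1]
  · rw [hTS', h.2.2.2]

end IsMoorePenroseInv

theorem stmt_8 (d : ℕ) (S Sd : Matrix (Fin d) (Fin d) ℝ)
    (hS : S.PosSemidef) (hSd : IsMoorePenroseInv S Sd)
    (x : Fin d → ℝ) (hx : ∃ z, S.mulVec z = x) :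
    IsMoorePenroseInv (S + vecMulVec x x)
      (Sd - (1 / (1 + x ⬝ᵥ Sd.mulVec x)) • (Sd * vecMulVec x x * Sd)) := by
  have hquad : 0 ≤ x ⬝ᵥ Sd *ᵥ x := by
    simpa only [star_trivial] using (hSd.posSemidef hS).dotProduct_mulVec_nonneg x
  exact hSd.add_vecMulVec (isHermitian_iff_isSymm.mp hS.1) hx (by positivity)
end

section
/- Let S be a positive semi-definite d×d matrix, x ∈ ℝ^d with x_⊥ := (I − S S†)x ≠ 0, S' = S + x xᵀ, and h ∈ range(S). Then hᵀ S'† h = hᵀ S† h and hᵀ S'† x = 0. -/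
open Matrix

section Helpers

variable {d : ℕ}

lemma mul_vvm (A : Matrix (Fin d) (Fin d) ℝ) (u v : Fin d → ℝ) :
    A * vecMulVec u v = vecMulVec (A.mulVec u) v := by
  ext i j
  simp only [mul_apply, vecMulVec_apply, mulVec, dotProduct, Finset.sum_mul]
  exact Finset.sum_congr rfl fun k _ => by ring

lemma vvm_mul (u v : Fin d → ℝ) (A : Matrix (Fin d) (Fin d) ℝ) :
    vecMulVec u v * A = vecMulVec u (Aᵀ.mulVec v) := by
  ext i j
  simp only [mul_apply, vecMulVec_apply, mulVec, dotProduct, Finset.mul_sum, transpose_apply]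
  exact Finset.sum_congr rfl fun k _ => by ring

lemma vvm_mulVec (u v w : Fin d → ℝ) :
    (vecMulVec u v).mulVec w = (v ⬝ᵥ w) • u := by
  ext i
  simp only [mulVec, dotProduct, vecMulVec_apply, Pi.smul_apply, smul_eq_mul]
  rw [Finset.sum_mul]
  exact Finset.sum_congr rfl fun k _ => by ring

lemma vvm_transpose (u v : Fin d → ℝ) : (vecMulVec u v)ᵀ = vecMulVec v u := by
  ext i j; simp [vecMulVec_apply, mul_comm]

lemma vvm_add_left (u v w : Fin d → ℝ) :
    vecMulVec (u + v) w = vecMulVec u w + vecMulVec v w := by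
  ext i j; simp [vecMulVec_apply, add_mul]

lemma vvm_sub_left (u v w : Fin d → ℝ) :
    vecMulVec (u - v) w = vecMulVec u w - vecMulVec v w := by
  ext i j; simp [vecMulVec_apply, sub_mul]

lemma vvm_smul_left (c : ℝ) (u w : Fin d → ℝ) :
    vecMulVec (c • u) w = c • vecMulVec u w := by
  ext i j; simp [vecMulVec_apply]; ring

lemma vvm_smul_right (c : ℝ) (u w : Fin d → ℝ) :
    vecMulVec u (c • w) = c • vecMulVec u w := by
  ext i j; simp [vecMulVec_apply]; ring

lemma vvm_zero_left (w : Fin d → ℝ) : vecMulVec (0 : Fin d → ℝ) w = 0 := by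
  ext i j; simp [vecMulVec_apply]

lemma vvm_zero_right (w : Fin d → ℝ) : vecMulVec w (0 : Fin d → ℝ) = 0 := by
  ext i j; simp [vecMulVec_apply]

lemma mp_unique (A X Y : Matrix (Fin d) (Fin d) ℝ)
    (hX : IsMoorePenroseInv A X) (hY : IsMoorePenroseInv A Y) : X = Y := by
  obtain ⟨hX1, hX2, hX3, hX4⟩ := hX
  obtain ⟨hY1, hY2, hY3, hY4⟩ := hY
  have hAX : A * X = A * Y := by
    calc A * X = (A * Y * A) * X := by rw [hY1]
    _ = (A * Y) * (A * X) := by rw [mul_assoc (A * Y) A X]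
    _ = (A * Y)ᵀ * (A * X)ᵀ := by rw [hY3, hX3]
    _ = ((A * X) * (A * Y))ᵀ := (transpose_mul _ _).symm
    _ = ((A * X * A) * Y)ᵀ := by rw [mul_assoc (A * X) A Y]
    _ = (A * Y)ᵀ := by rw [hX1]
    _ = A * Y := hY3
  have hXA : X * A = Y * A := by
    calc X * A = X * (A * Y * A) := by rw [hY1]
    _ = (X * A) * (Y * A) := by simp only [mul_assoc]
    _ = (X * A)ᵀ * (Y * A)ᵀ := by rw [hX4, hY4]
    _ = ((Y * A) * (X * A))ᵀ := (transpose_mul _ _).symm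
    _ = (Y * A)ᵀ := by simp only [mul_assoc]; rw [← mul_assoc A X A, hX1]
    _ = Y * A := hY4
  calc X = X * A * X := hX2.symm
  _ = X * (A * Y) := by rw [mul_assoc, hAX]
  _ = (X * A) * Y := by rw [mul_assoc]
  _ = Y * A * Y := by rw [hXA]
  _ = Y := hY2

lemma mp_symm (S Sd : Matrix (Fin d) (Fin d) ℝ) (hs : Sᵀ = S)
    (hSd : IsMoorePenroseInv S Sd) : Sdᵀ = Sd := by
  refine mp_unique S Sdᵀ Sd ⟨?_, ?_, ?_, ?_⟩ hSd
  · have := congrArg transpose hSd.1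
    simpa [transpose_mul, hs, mul_assoc] using this
  · have := congrArg transpose hSd.2.1
    simpa [transpose_mul, hs, mul_assoc] using this
  · have e : S * Sdᵀ = Sd * S := by
      rw [← hSd.2.2.2, transpose_mul, hs]
    rw [e, hSd.2.2.2, ← e]
  · have e : Sdᵀ * S = S * Sd := by
      rw [← hSd.2.2.1, transpose_mul, hs]
    rw [e, hSd.2.2.1, ← e]

end Helpers

theorem stmt_10 (d : ℕ) (S Sd S'd : Matrix (Fin d) (Fin d) ℝ)
    (hS : S.PosSemidef) (hSd : IsMoorePenroseInv S Sd)
    (x : Fin d → ℝ) (hperp : x - (S * Sd).mulVec x ≠ 0)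
    (hS'd : IsMoorePenroseInv (S + vecMulVec x x) S'd)
    (h : Fin d → ℝ) (hh : ∃ z, S.mulVec z = h) :
    h ⬝ᵥ S'd.mulVec h = h ⬝ᵥ Sd.mulVec h ∧ h ⬝ᵥ S'd.mulVec x = 0 := by
  obtain ⟨z, hz⟩ := hh
  have hSsym : Sᵀ = S := by
    rw [← conjTranspose_eq_transpose_of_trivial]; exact hS.1.eq
  have hSdsym : Sdᵀ = Sd := mp_symm S Sd hSsym hSd
  have hcomm : Sd * S = S * Sd := by
    rw [← hSd.2.2.1, transpose_mul, hSdsym, hSsym]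
  set P := S * Sd with hP
  set p := x - P.mulVec x with hp
  set n := p ⬝ᵥ p with hn
  set a := Sd.mulVec x with ha
  set β := (1 : ℝ) + x ⬝ᵥ a with hβ
  set M := Sd - n⁻¹ • vecMulVec a p - n⁻¹ • vecMulVec p a + (β / (n * n)) • vecMulVec p p
    with hM
  have hPsymm : Pᵀ = P := hSd.2.2.1
  have hPP : P * P = P := by rw [hP, ← mul_assoc, hSd.1]
  have hSP : S * P = S := by rw [← hcomm, ← mul_assoc, hSd.1]
  have hSdP : Sd * P = Sd := by rw [hP, ← mul_assoc, hSd.2.1]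
  have hPSd : P * Sd = Sd := by rw [← hcomm, hSd.2.1]
  have hSp : S.mulVec p = 0 := by
    rw [hp, mulVec_sub, mulVec_mulVec, hSP, sub_self]
  have hSdp : Sd.mulVec p = 0 := by
    rw [hp, mulVec_sub, mulVec_mulVec, hSdP, sub_self]
  have hPp : P.mulVec p = 0 := by
    rw [hp, mulVec_sub, mulVec_mulVec, hPP, sub_self]
  have hPa : P.mulVec a = a := by rw [ha, mulVec_mulVec, hPSd]
  have hxsplit : P.mulVec x + p = x := by rw [hp]; abel
  have hpa : p ⬝ᵥ a = 0 := by
    rw [ha, dotProduct_mulVec, ← mulVec_transpose, hSdsym, hSdp, zero_dotProduct]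
  have hap : a ⬝ᵥ p = 0 := by rw [dotProduct_comm]; exact hpa
  have hpPx : p ⬝ᵥ P.mulVec x = 0 := by
    rw [dotProduct_mulVec, ← mulVec_transpose, hPsymm, hPp, zero_dotProduct]
  have hpx : p ⬝ᵥ x = n := by
    calc p ⬝ᵥ x = p ⬝ᵥ x - p ⬝ᵥ P.mulVec x := by rw [hpPx, sub_zero]
    _ = p ⬝ᵥ (x - P.mulVec x) := (dotProduct_sub _ _ _).symm
    _ = n := by rw [← hp]
  have hxp : x ⬝ᵥ p = n := by rw [dotProduct_comm]; exact hpx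
  have hn0 : n ≠ 0 := by
    rw [hn]; exact fun hc => hperp (dotProduct_self_eq_zero.mp hc)
  have hMsymm : Mᵀ = M := by
    rw [hM]
    simp only [transpose_add, transpose_sub, transpose_smul, vvm_transpose, hSdsym]
    abel
  have hMx : M.mulVec x = n⁻¹ • p := by
    rw [hM]
    simp only [add_mulVec, sub_mulVec, smul_mulVec, vvm_mulVec, hpx, hxp,
      dotProduct_comm a x, hβ]
    match_scalars <;> field_simp <;> ring
  have hMp : M.mulVec p = (β / n) • p - a := by
    rw [hM]
    simp only [add_mulVec, sub_mulVec, smul_mulVec, vvm_mulVec, hSdp, hap, ← hn]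
    match_scalars <;> field_simp <;> ring
  have hSM : S * M = P - n⁻¹ • vecMulVec (P.mulVec x) p := by
    rw [hM]
    simp only [mul_sub, mul_add, Matrix.mul_smul, mul_vvm, hSp, vvm_zero_left, smul_zero,
      sub_zero, add_zero]
    rw [ha, mulVec_mulVec, ← hP]
  have hXM : vecMulVec x x * M = n⁻¹ • vecMulVec x p := by
    rw [vvm_mul, hMsymm, hMx, vvm_smul_right]
  have hS'M : (S + vecMulVec x x) * M = P + n⁻¹ • vecMulVec p p := by
    rw [add_mul, hSM, hXM]
    have := vvm_sub_left x (P.mulVec x) p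
    rw [← hp] at this
    rw [this, smul_sub]
    abel
  have hMS' : M * (S + vecMulVec x x) = P + n⁻¹ • vecMulVec p p := by
    calc M * (S + vecMulVec x x) = ((S + vecMulVec x x) * M)ᵀ := by
          rw [transpose_mul, hMsymm, transpose_add, hSsym, vvm_transpose]
    _ = (P + n⁻¹ • vecMulVec p p)ᵀ := by rw [hS'M]
    _ = P + n⁻¹ • vecMulVec p p := by
          rw [transpose_add, transpose_smul, vvm_transpose, hPsymm]
  have c3 : ((S + vecMulVec x x) * M)ᵀ = (S + vecMulVec x x) * M := by
    rw [hS'M, transpose_add, transpose_smul, vvm_transpose, hPsymm]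
  have c4 : (M * (S + vecMulVec x x))ᵀ = M * (S + vecMulVec x x) := by
    rw [hMS', transpose_add, transpose_smul, vvm_transpose, hPsymm]
  have c1 : (S + vecMulVec x x) * M * (S + vecMulVec x x) = S + vecMulVec x x := by
    rw [hS'M, add_mul, mul_add, mul_add, Matrix.smul_mul, Matrix.smul_mul]
    have e1 : P * S = S := by rw [hP, hSd.1]
    have e2 : P * vecMulVec x x = vecMulVec (P.mulVec x) x := mul_vvm _ _ _
    have e3 : vecMulVec p p * S = 0 := by
      rw [vvm_mul, hSsym, hSp, vvm_zero_right]
    have e4 : vecMulVec p p * vecMulVec x x = n • vecMulVec p x := by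
      rw [vvm_mul, vvm_transpose, vvm_mulVec, hxp, vvm_smul_right]
    rw [e1, e2, e3, e4, smul_zero, smul_smul, inv_mul_cancel₀ hn0, one_smul]
    have e5 : vecMulVec (P.mulVec x) x + vecMulVec p x = vecMulVec x x := by
      rw [← vvm_add_left, hxsplit]
    rw [← e5]
    abel
  have c2 : M * (S + vecMulVec x x) * M = M := by
    rw [mul_assoc, hS'M, mul_add, Matrix.mul_smul, mul_vvm, hMp]
    have eMP : M * P = Sd - n⁻¹ • vecMulVec p a := by
      rw [hM]
      simp only [sub_mul, add_mul, Matrix.smul_mul, vvm_mul, hPsymm, hPp, hPa,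
        vvm_zero_right, smul_zero, sub_zero, add_zero, hSdP]
    rw [eMP, vvm_sub_left ((β / n) • p) a p, vvm_smul_left, smul_sub, smul_smul]
    have : n⁻¹ * (β / n) = β / (n * n) := by field_simp
    rw [this, hM]
    abel
  have hS'dM : S'd = M := mp_unique (S + vecMulVec x x) S'd M hS'd ⟨c1, c2, c3, c4⟩
  have hph : p ⬝ᵥ h = 0 := by
    rw [← hz, dotProduct_mulVec, ← mulVec_transpose, hSsym, hSp, zero_dotProduct]
  have hhp : h ⬝ᵥ p = 0 := by rw [dotProduct_comm]; exact hph
  constructor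
  · rw [hS'dM, hM]
    simp only [add_mulVec, sub_mulVec, smul_mulVec, vvm_mulVec, hph, zero_smul,
      smul_zero, dotProduct_add, dotProduct_sub, dotProduct_smul, smul_eq_mul,
      dotProduct_zero, hhp, mul_zero, sub_zero, add_zero]
  · rw [hS'dM, hMx, dotProduct_smul, hhp, smul_eq_mul, mul_zero]
end

section
/- Fix a > 0 with a < 1 and define B(γ) = v²γ + 1 − γ + a v² γ (1 − γ) for γ ∈ [0,1] and v ∈ ℝ. Then for every v and every γ ∈ [0,1], B(γ) ≤ max{v², 1/(1−a)}. -/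
theorem stmt_14 (a : ℝ) (ha : 0 < a) (ha1 : a < 1) :
    ∀ (v γ : ℝ), γ ∈ Set.Icc (0 : ℝ) 1 →
      v ^ 2 * γ + 1 - γ + a * v ^ 2 * γ * (1 - γ) ≤ max (v ^ 2) (1 / (1 - a)) := by
  intro v γ hγ
  obtain ⟨h0, h1⟩ := hγ
  have h1a : (0:ℝ) < 1 - a := by linarith
  set w := v ^ 2 with hw
  have hw0 : 0 ≤ w := sq_nonneg v
  rcases le_or_gt ((1 - a) * w) 1 with hc | hc
  · refine le_trans ?_ (le_max_right _ _)
    rw [le_div_iff₀ h1a]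
    rcases le_or_gt ((1 + a) * w) 1 with hc2 | hc2
    · nlinarith [mul_nonneg h0 (sub_nonneg.2 hc2),
        mul_nonneg (mul_nonneg (mul_nonneg h0 h0) hw0) ha.le]
    · have hd : 0 < a * (1 - a) * w := by nlinarith
      have hB : 0 ≤ (1 + a) ^ 2 * w - (1 - a) := by nlinarith
      have hg : 0 ≤ (1 - a) * (4 * a ^ 2 * w - (1 - a) * ((1 + a) * w - 1) ^ 2) := by
        nlinarith [mul_nonneg (sub_nonneg.2 hc) hB]
      nlinarith [sq_nonneg (2 * (a * (1 - a) * w) * γ - (1 - a) * ((1 + a) * w - 1)), hg,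
        hd]
  · refine le_trans ?_ (le_max_left _ _)
    nlinarith [mul_nonneg (sub_nonneg.2 h1) (mul_nonneg hw0 (sub_nonneg.2 h1)),
      mul_nonneg (sub_nonneg.2 h1) h0, mul_nonneg (mul_nonneg (sub_nonneg.2 h1) h0) hw0]
end

section
/- Let v ∈ ℝ, γ ∈ (0,1], α ≥ 9/8, and set a = (9/8)/α. Then (vγ√(1−γ²)/α)·e^{(v²γ² + 1 − γ²)/(2α)} + e^{(v²γ² − 2vγ√(1−γ²) + 1 − γ²)/(2α)} ≤ e^{v²/(2α)} + e^{1/(2(α − 9/8))}, where in the boundary case α = 9/8 the last term is interpreted as +∞ (so the inequality is assumed for α > 9/8). -/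
set_option maxHeartbeats 1000000

lemma Qnn (y : ℝ) (h0 : 0 ≤ y) (h1 : y ≤ 16/9) :
    0 ≤ 1/16 - 1/6*y + 179/1536*y^2 - 27/3200*y^3 + 52099/1843200*y^4
      - 43/230400*y^5 + 489739/117964800*y^6 - 1/614400*y^7 - 1/10240000*y^8 := by
  nlinarith [sq_nonneg (y - 37/50), sq_nonneg (y*(y - 3/20)), sq_nonneg (y^2*(y - 23/1000)),
    mul_nonneg (pow_nonneg h0 6) (sub_nonneg.2 h1), mul_nonneg (pow_nonneg h0 7) (sub_nonneg.2 h1),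
    sq_nonneg y, sq_nonneg (y^2), sq_nonneg (y^3)]

-- exp x ≥ 1 + x + x^2/2 for x ≥ 0 (n = 3 partial sum)
lemma quad_le_exp {x : ℝ} (hx : 0 ≤ x) : 1 + x + x^2/2 ≤ Real.exp x := by
  have h := Real.sum_le_exp_of_nonneg hx 3
  simp [Finset.sum_range_succ] at h
  convert h using 1 <;> norm_num <;> ring

-- exp u ≥ deg-4 partial sum for u ≥ 0
lemma quart_le_exp {u : ℝ} (hu : 0 ≤ u) : 1 + u + u^2/2 + u^3/6 + u^4/24 ≤ Real.exp u := by
  have h := Real.sum_le_exp_of_nonneg hu 5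
  simp [Finset.sum_range_succ, Nat.factorial] at h
  convert h using 1 <;> norm_num <;> ring

-- exp t ≤ ... for 0 ≤ t ≤ 1 (n = 5)
lemma exp_le_quint {t : ℝ} (h0 : 0 ≤ t) (h1 : t ≤ 1) :
    Real.exp t ≤ 1 + t + t^2/2 + t^3/6 + t^4/24 + t^5/100 := by
  have h := Real.exp_bound' h0 h1 (n := 5) (by norm_num)
  simp [Finset.sum_range_succ, Nat.factorial] at h
  calc Real.exp t ≤ _ := h
    _ ≤ _ := by norm_num; nlinarith [pow_nonneg h0 5]

lemma key (x : ℝ) : x + Real.exp (-x) ≤ Real.exp (9/16 * x^2) := by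
  rcases le_or_gt 0 x with hx | hx
  · -- x ≥ 0 : exp(-x) ≤ 1/(1+x+x²/2)
    have hq := quad_le_exp hx
    have hpos : (0:ℝ) < 1 + x + x^2/2 := by nlinarith
    have h2 : Real.exp (-x) ≤ (1 + x + x^2/2)⁻¹ := by
      rw [Real.exp_neg]
      exact inv_anti₀ hpos hq
    have h3 : (1 + x + x^2/2)⁻¹ ≤ 1 + 9/16*x^2 - x := by
      rw [inv_le_iff_one_le_mul₀ hpos]
      nlinarith [sq_nonneg x, pow_nonneg hx 3, pow_nonneg hx 4]
    have h4 : 1 + 9/16*x^2 ≤ Real.exp (9/16*x^2) := by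
      have := Real.add_one_le_exp (9/16*x^2); linarith
    linarith
  · set y := -x with hy
    have hy0 : 0 < y := by simp [hy]; linarith
    have hx2 : x^2 = y^2 := by rw [hy]; ring
    have hgoal : -y + Real.exp y ≤ Real.exp (9/16 * y^2) → x + Real.exp (-x) ≤ Real.exp (9/16*x^2) := by
      intro h; rw [hx2]; simpa [hy] using h
    apply hgoal
    rcases le_or_gt y (16/9) with h169 | h169
    · -- hard case
      have ht0 : 0 ≤ y/2 := by linarith
      have ht1 : y/2 ≤ 1 := by linarith
      have hU := exp_le_quint ht0 ht1
      have hUpos : 0 ≤ Real.exp (y/2) := (Real.exp_pos _).le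
      have hexpy : Real.exp y = Real.exp (y/2) ^ 2 := by
        rw [sq, ← Real.exp_add]; ring_nf
      have hUB : Real.exp y ≤ (1 + y/2 + (y/2)^2/2 + (y/2)^3/6 + (y/2)^4/24 + (y/2)^5/100)^2 := by
        rw [hexpy]; exact pow_le_pow_left₀ hUpos hU 2
      have hu0 : (0:ℝ) ≤ 9/16*y^2 := by positivity
      have hS := quart_le_exp hu0
      have hQ := Qnn y hy0.le h169
      have key2 : (1 + y/2 + (y/2)^2/2 + (y/2)^3/6 + (y/2)^4/24 + (y/2)^5/100)^2 ≤
          1 + (9/16*y^2) + (9/16*y^2)^2/2 + (9/16*y^2)^3/6 + (9/16*y^2)^4/24 + y := by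
        nlinarith [mul_nonneg (sq_nonneg y) hQ]
      linarith
    · have : y ≤ 9/16*y^2 := by nlinarith
      have := Real.exp_le_exp.2 this
      linarith

theorem stmt_15 (v γ α : ℝ) (hγ0 : 0 < γ) (hγ1 : γ ≤ 1) (hα : 9 / 8 < α) :
    (v * γ * Real.sqrt (1 - γ ^ 2) / α) *
        Real.exp ((v ^ 2 * γ ^ 2 + 1 - γ ^ 2) / (2 * α)) +
      Real.exp ((v ^ 2 * γ ^ 2 - 2 * v * γ * Real.sqrt (1 - γ ^ 2) + 1 - γ ^ 2) / (2 * α)) ≤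
    Real.exp (v ^ 2 / (2 * α)) + Real.exp (1 / (2 * (α - 9 / 8))) := by
  have hα0 : (0:ℝ) < α := by linarith
  have h1γ : (0:ℝ) ≤ 1 - γ^2 := by nlinarith
  have hs2 : Real.sqrt (1 - γ^2) ^ 2 = 1 - γ^2 := Real.sq_sqrt h1γ
  set s : ℝ := Real.sqrt (1 - γ^2) with hs
  set E : ℝ := (v^2*γ^2 + 1 - γ^2) / (2*α) with hE
  set x : ℝ := v * γ * s / α with hxdef
  have hE2 : (v^2*γ^2 - 2*v*γ*s + 1 - γ^2) / (2*α) = E - x := by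
    rw [hE, hxdef]; field_simp; ring
  have hx2 : x^2 = v^2*γ^2*(1-γ^2)/α^2 := by
    rw [hxdef, div_pow, ← hs2]; ring
  have hstep1 : x * Real.exp E + Real.exp (E - x) ≤ Real.exp (E + 9/16*x^2) := by
    have h1 : Real.exp (E - x) = Real.exp E * Real.exp (-x) := by
      rw [← Real.exp_add]; ring_nf
    have h2 : x * Real.exp E + Real.exp (E - x) = Real.exp E * (x + Real.exp (-x)) := by
      rw [h1]; ring
    rw [h2, Real.exp_add]
    exact mul_le_mul_of_nonneg_left (key x) (Real.exp_pos E).le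
  rw [hE2]
  have h89 : (0:ℝ) < 8*α - 9 := by linarith
  have hEx : E + 9/16*x^2 = ((v^2*γ^2 + 1 - γ^2)*(8*α) + 9*v^2*γ^2*(1-γ^2))/(16*α^2) := by
    rw [hE, hx2]; field_simp; ring
  have hfin : Real.exp (E + 9/16*x^2) ≤
      Real.exp (v ^ 2 / (2 * α)) + Real.exp (1 / (2 * (α - 9 / 8))) := by
    rcases le_or_gt (8*α) (v^2*(8*α-9)) with hc | hc
    · have hpoly : (v^2*γ^2 + 1 - γ^2)*(8*α) + 9*v^2*γ^2*(1-γ^2) ≤ 8*α*v^2 := by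
        nlinarith [mul_nonneg h1γ (sub_nonneg.2 (by nlinarith : 9*v^2*γ^2 ≤ 8*α*v^2 - 8*α)), sq_nonneg v, sq_nonneg γ]
      have hle : E + 9/16*x^2 ≤ v^2/(2*α) := by
        rw [hEx]
        calc ((v^2*γ^2 + 1 - γ^2)*(8*α) + 9*v^2*γ^2*(1-γ^2))/(16*α^2)
            ≤ (8*α*v^2)/(16*α^2) := by
              exact div_le_div_of_nonneg_right hpoly (by positivity)
          _ = v^2/(2*α) := by field_simp; ring
      have := Real.exp_le_exp.2 hle
      have hp := (Real.exp_pos (1 / (2 * (α - 9/8)))).le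
      linarith
    · have hpoly : ((v^2*γ^2 + 1 - γ^2)*(8*α) + 9*v^2*γ^2*(1-γ^2))*(8*α-9) ≤ 64*α^2 := by
        nlinarith [sq_nonneg (1-γ^2),
          mul_nonneg (mul_nonneg (sq_nonneg γ) (by nlinarith : (0:ℝ) ≤ 8*α + 9*(1-γ^2))) (sub_nonneg.2 hc.le),
          mul_pos hα0 hα0, sq_nonneg v, mul_pos hα0 h89]
      have hle : E + 9/16*x^2 ≤ 1/(2*(α - 9/8)) := by
        rw [hEx]
        rw [div_le_div_iff₀ (by positivity) (by nlinarith : (0:ℝ) < 2*(α - 9/8))]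
        linarith [hpoly]
      have := Real.exp_le_exp.2 hle
      have hp := (Real.exp_pos (v^2 / (2*α))).le
      linarith
  linarith [hstep1, hfin]
end

section
/- Let d ≥ 2. There exist unit-direction instance vectors and signs such that for any sequence of weight vectors (w_t)_{t=1}^T chosen online, an adversary choosing g_t ∈ {−1/√2, 1/√2} (for t ≤ d) or g_t ∈ {−1,1} (for t > d) with sign matching sign(x_tᵀ w_t), and x_t with x_tᵀ S_{t−1}† x_t = 1 and h_{t−1}ᵀ S_{t−1}† x_t = 0 (for t > d), guarantees h_Tᵀ S_T† h_T = T/2, where h_t = −Σ_{q≤t} g_q x_q and S_t = Σ_{q≤t} x_q x_qᵀ. Consequently, for the comparator u = β√(2/T) S_T† h_T one has ‖u‖_{S_T} = β and Σ_t g_t x_tᵀ(w_t − u) ≥ ‖u‖_{S_T}·√(T/2). -/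
/-!
For the first `d` trials the adversary plays the standard basis, so that `S_d = I` and
`h_dᵀ h_d = d / 2`. Afterwards it picks `w ≠ 0` orthogonal to `h` and plays
`x = S w / √(wᵀ S w)`; since `S⁻¹ x` is a multiple of `w`, this gives `xᵀ S⁻¹ x = 1` and
`hᵀ S⁻¹ x = 0`, and by Sherman–Morrison `hᵀ S⁻¹ h` grows by exactly `1/2` whatever the sign of
the gradient. Each sign is taken to be the sign of the learner's prediction; this is
well defined because the instance of trial `t` depends only on the earlier signs. Plugging
`S_T† h_T` into the regret then only uses `S† S S† = S†`.
-/

open Matrix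

section LinearAlgebra

variable {n : Type*} [Fintype n]

theorem inv_add_vecMulVec [DecidableEq n] {K : Type*} [Field K] {A : Matrix n n K} (hA : IsUnit A)
    (u v : n → K) (huv : 1 + v ⬝ᵥ A⁻¹ *ᵥ u ≠ 0) :
    (A + vecMulVec u v)⁻¹
      = A⁻¹ - (1 + v ⬝ᵥ A⁻¹ *ᵥ u)⁻¹ • vecMulVec (A⁻¹ *ᵥ u) (v ᵥ* A⁻¹) := by
  have hAA : A * A⁻¹ = 1 := mul_nonsing_inv A ((isUnit_iff_isUnit_det A).1 hA)
  apply inv_eq_right_inv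
  set c := 1 + v ⬝ᵥ A⁻¹ *ᵥ u
  have hc : v ⬝ᵥ A⁻¹ *ᵥ u = c - 1 := by simp [c]
  rw [add_mul, mul_sub, mul_sub, Matrix.mul_smul, Matrix.mul_smul, mul_vecMulVec, mul_vecMulVec,
    mulVec_mulVec, hAA, one_mulVec, vecMulVec_mul, vecMulVec_mulVec, op_smul_eq_smul, hc,
    smul_vecMulVec, smul_smul, inv_mul_eq_div, sub_div, div_self huv, sub_smul, one_smul, one_div]
  abel

theorem dotProduct_mulVec_comm_of_transpose_eq {B : Matrix n n ℝ} (hB : Bᵀ = B) (a b : n → ℝ) :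
    a ⬝ᵥ B *ᵥ b = b ⬝ᵥ B *ᵥ a := by
  rw [dotProduct_mulVec, ← hB, vecMul_transpose, dotProduct_comm, hB]

theorem dotProduct_inv_add_vecMulVec_self_mulVec [DecidableEq n] {S : Matrix n n ℝ}
    (hS : IsUnit S) (hSt : Sᵀ = S) {x : n → ℝ} (hx : x ⬝ᵥ S⁻¹ *ᵥ x = 1) (a : n → ℝ) :
    a ⬝ᵥ (S + vecMulVec x x)⁻¹ *ᵥ a = a ⬝ᵥ S⁻¹ *ᵥ a - (a ⬝ᵥ S⁻¹ *ᵥ x) ^ 2 / 2 := by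
  have hSinv : S⁻¹ᵀ = S⁻¹ := by rw [transpose_nonsing_inv, hSt]
  rw [inv_add_vecMulVec hS x x (by rw [hx]; norm_num), hx, sub_mulVec, smul_mulVec,
    vecMulVec_mulVec, op_smul_eq_smul, dotProduct_sub, dotProduct_smul, dotProduct_smul,
    ← dotProduct_mulVec, dotProduct_mulVec_comm_of_transpose_eq hSinv x a, smul_eq_mul,
    smul_eq_mul]
  ring

theorem dotProduct_inv_add_vecMulVec_self_sub_smul [DecidableEq n] {S : Matrix n n ℝ}
    (hS : IsUnit S) (hSt : Sᵀ = S) {x h : n → ℝ} (hx : x ⬝ᵥ S⁻¹ *ᵥ x = 1)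
    (hhx : h ⬝ᵥ S⁻¹ *ᵥ x = 0) (σ : ℝ) :
    (h - σ • x) ⬝ᵥ (S + vecMulVec x x)⁻¹ *ᵥ (h - σ • x) = h ⬝ᵥ S⁻¹ *ᵥ h + σ ^ 2 / 2 := by
  have hSinv : S⁻¹ᵀ = S⁻¹ := by rw [transpose_nonsing_inv, hSt]
  have hxh : x ⬝ᵥ S⁻¹ *ᵥ h = 0 := by rw [dotProduct_mulVec_comm_of_transpose_eq hSinv, hhx]
  rw [dotProduct_inv_add_vecMulVec_self_mulVec hS hSt hx]
  simp only [mulVec_sub, mulVec_smul, dotProduct_sub, sub_dotProduct, dotProduct_smul,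
    smul_dotProduct, smul_eq_mul, hx, hxh, hhx]
  ring

theorem Matrix.PosDef.dotProduct_inv_mulVec_normalize [DecidableEq n] {S : Matrix n n ℝ}
    (hS : S.PosDef) {w h x : n → ℝ} (hw : w ≠ 0) (hwh : w ⬝ᵥ h = 0)
    (hx : x = (√(w ⬝ᵥ S *ᵥ w))⁻¹ • S *ᵥ w) :
    x ⬝ᵥ S⁻¹ *ᵥ x = 1 ∧ h ⬝ᵥ S⁻¹ *ᵥ x = 0 := by
  have hq : 0 < w ⬝ᵥ S *ᵥ w := by simpa using hS.dotProduct_mulVec_pos hw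
  have hSx : S⁻¹ *ᵥ x = (√(w ⬝ᵥ S *ᵥ w))⁻¹ • w := by
    rw [hx, mulVec_smul, mulVec_mulVec,
      nonsing_inv_mul _ ((isUnit_iff_isUnit_det S).1 hS.isUnit), one_mulVec]
  rw [hSx, dotProduct_smul, dotProduct_smul, dotProduct_comm h, hwh, smul_zero]
  refine ⟨?_, rfl⟩
  rw [hx, smul_dotProduct, dotProduct_comm (S *ᵥ w), smul_smul, smul_eq_mul, ← mul_inv,
    Real.mul_self_sqrt hq.le, inv_mul_cancel₀ hq.ne']

theorem comparator_of_pinv {S Sd : Matrix n n ℝ} (hSd : Sd * S * Sd = Sd) (hSdt : Sdᵀ = Sd)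
    {h u : n → ℝ} {τ β : ℝ} (hτ : 0 < τ) (hβ : 0 ≤ β) (hh : h ⬝ᵥ Sd *ᵥ h = τ / 2)
    (hu : u = (β * √(2 / τ)) • Sd *ᵥ h) :
    √(u ⬝ᵥ S *ᵥ u) = β ∧ h ⬝ᵥ u = β * √(τ / 2) := by
  have hSdh : (Sd *ᵥ h) ⬝ᵥ S *ᵥ Sd *ᵥ h = τ / 2 := by
    rw [dotProduct_comm, dotProduct_mulVec, ← mulVec_transpose, hSdt, mulVec_mulVec,
      mulVec_mulVec, hSd, dotProduct_comm, hh]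
  have hsq : √(2 / τ) * √(2 / τ) = 2 / τ := Real.mul_self_sqrt (by positivity)
  constructor
  · rw [hu, mulVec_smul, dotProduct_smul, smul_dotProduct, hSdh, smul_eq_mul, smul_eq_mul]
    convert Real.sqrt_sq hβ using 2
    calc β * √(2 / τ) * (β * √(2 / τ) * (τ / 2))
        = β ^ 2 * (√(2 / τ) * √(2 / τ) * (τ / 2)) := by ring
      _ = β ^ 2 := by rw [hsq]; field_simp
  · have hroot : √(2 / τ) * (τ / 2) = √(τ / 2) := by
      calc √(2 / τ) * (τ / 2) = √(2 / τ) * (√(τ / 2) * √(τ / 2)) := by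
            rw [Real.mul_self_sqrt (by positivity)]
        _ = √(2 / τ * (τ / 2)) * √(τ / 2) := by rw [Real.sqrt_mul (by positivity)]; ring
        _ = √(τ / 2) := by rw [show 2 / τ * (τ / 2) = 1 by field_simp]; simp
    rw [hu, dotProduct_smul, hh, smul_eq_mul, mul_assoc, hroot]

theorem sum_mul_dotProduct_sub {ι : Type*} [Fintype ι] (g : ι → ℝ) (x w : ι → n → ℝ)
    (u : n → ℝ) :
    ∑ t, g t * (x t ⬝ᵥ (w t - u)) = ∑ t, g t * (x t ⬝ᵥ w t) + (-∑ t, g t • x t) ⬝ᵥ u := by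
  rw [neg_dotProduct, sum_dotProduct, ← sub_eq_add_neg, ← Finset.sum_sub_distrib]
  refine Finset.sum_congr rfl fun t _ => ?_
  rw [smul_dotProduct, smul_eq_mul, dotProduct_sub, mul_sub]

end LinearAlgebra

theorem isMoorePenroseInv_self {d : ℕ} {S : Matrix (Fin d) (Fin d) ℝ} (hS : S * S = S)
    (hSt : Sᵀ = S) :
    IsMoorePenroseInv S S :=
  ⟨by rw [hS, hS], by rw [hS, hS], by rw [hS, hSt], by rw [hS, hSt]⟩

theorem isMoorePenroseInv_inv {d : ℕ} {S : Matrix (Fin d) (Fin d) ℝ} (hS : IsUnit S) :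
    IsMoorePenroseInv S S⁻¹ := by
  have hdet := (isUnit_iff_isUnit_det S).1 hS
  refine ⟨?_, ?_, ?_, ?_⟩
  · rw [mul_nonsing_inv _ hdet, Matrix.one_mul]
  · rw [nonsing_inv_mul _ hdet, Matrix.one_mul]
  · rw [mul_nonsing_inv _ hdet, transpose_one]
  · rw [nonsing_inv_mul _ hdet, transpose_one]

-- Truncating the argument to `q < t` makes the recursion well founded; by `causalFix_eq` it is
-- harmless for causal `F`.
def causalFix {α : Type*} [Inhabited α] (F : ℕ → (ℕ → α) → α) (t : ℕ) : α :=
  F t fun q => if q < t then causalFix F q else default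

theorem causalFix_eq {α : Type*} [Inhabited α] {F : ℕ → (ℕ → α) → α}
    (hF : ∀ t ε ε', (∀ q < t, ε q = ε' q) → F t ε = F t ε') (t : ℕ) :
    causalFix F t = F t (causalFix F) := by
  rw [causalFix]
  exact hF t _ _ fun q hq => if_pos hq

noncomputable def signOrOne (r : ℝ) : ℝ := if 0 ≤ r then 1 else -1

theorem signOrOne_eq_one_or (r : ℝ) : signOrOne r = 1 ∨ signOrOne r = -1 := by
  unfold signOrOne; split_ifs <;> simp

theorem signOrOne_mul_self_nonneg (r : ℝ) : 0 ≤ signOrOne r * r := by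
  unfold signOrOne; split_ifs <;> linarith

namespace ScaleInvariantAdversary

structure State (d : ℕ) where
  gram : Matrix (Fin d) (Fin d) ℝ
  grad : Fin d → ℝ

variable {d : ℕ}

noncomputable def orthDir (h : Fin d → ℝ) : Fin d → ℝ :=
  Classical.epsilon fun w => w ≠ 0 ∧ w ⬝ᵥ h = 0

theorem orthDir_spec (hd : 2 ≤ d) (h : Fin d → ℝ) : orthDir h ≠ 0 ∧ orthDir h ⬝ᵥ h = 0 :=
  haveI := Fin.nontrivial_iff_two_le.2 hd
  Classical.epsilon_spec (exists_ne_zero_dotProduct_eq_zero h)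

noncomputable def instanceAt (t : ℕ) (s : State d) : Fin d → ℝ :=
  if ht : t < d then Pi.single ⟨t, ht⟩ 1
  else (√(orthDir s.grad ⬝ᵥ s.gram *ᵥ orthDir s.grad))⁻¹ • s.gram *ᵥ orthDir s.grad

noncomputable def gradScale (d t : ℕ) : ℝ := if t < d then 1 / √2 else 1

variable (d) in
noncomputable def state (ε : ℕ → ℝ) : ℕ → State d
  | 0 => ⟨0, 0⟩
  | t + 1 =>
    let x := instanceAt t (state ε t)
    ⟨(state ε t).gram + vecMulVec x x, (state ε t).grad - (gradScale d t * ε t) • x⟩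

variable (d) in
noncomputable def inst (ε : ℕ → ℝ) (t : ℕ) : Fin d → ℝ := instanceAt t (state d ε t)

theorem gram_state (ε : ℕ → ℝ) (t : ℕ) :
    (state d ε t).gram = ∑ q ∈ Finset.range t, vecMulVec (inst d ε q) (inst d ε q) := by
  induction t with
  | zero => rfl
  | succ t ih => rw [Finset.sum_range_succ, ← ih]; rfl

theorem grad_state (ε : ℕ → ℝ) (t : ℕ) :
    (state d ε t).grad = -∑ q ∈ Finset.range t, (gradScale d q * ε q) • inst d ε q := by
  induction t with
  | zero => simp [state]
  | succ t ih =>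
    rw [Finset.sum_range_succ, neg_add, ← ih, ← sub_eq_add_neg]
    rfl

theorem state_congr {ε ε' : ℕ → ℝ} {t : ℕ} (h : ∀ q < t, ε q = ε' q) :
    state d ε t = state d ε' t := by
  induction t with
  | zero => rfl
  | succ t ih =>
    simp only [state, ih fun q hq => h q (by omega), h t (by omega)]

theorem inst_congr {ε ε' : ℕ → ℝ} {t : ℕ} (h : ∀ q < t, ε q = ε' q) :
    inst d ε t = inst d ε' t := by
  rw [inst, inst, state_congr h]

theorem state_of_le (ε : ℕ → ℝ) {t : ℕ} (ht : t ≤ d) :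
    (state d ε t).gram = diagonal (fun i : Fin d => if (i : ℕ) < t then (1 : ℝ) else 0) ∧
      (state d ε t).grad = fun i : Fin d => if (i : ℕ) < t then -(ε i / √2) else 0 := by
  induction t with
  | zero => constructor <;> ext <;> simp [state]
  | succ t ih =>
    obtain ⟨hS, hh⟩ := ih (by omega)
    have hx : instanceAt t (state d ε t) = Pi.single ⟨t, by omega⟩ 1 := dif_pos (by omega)
    simp only [state, hx, hS, hh, gradScale, if_pos (show t < d by omega)]
    constructor
    · ext i j
      by_cases hij : i = j
      · subst hij
        by_cases hit : (i : ℕ) = t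
        · simp [vecMulVec, Pi.single_apply, Fin.ext_iff, hit]
        · simp [vecMulVec, Pi.single_apply, Fin.ext_iff, hit, le_iff_lt_or_eq]
      · simp [vecMulVec, Pi.single_apply, Fin.ext_iff, hij]
        exact fun hj hi => hij (Fin.ext (hi.trans hj.symm))
    · ext i
      by_cases hit : (i : ℕ) = t
      · simp [Pi.single_apply, Fin.ext_iff, hit]; ring
      · simp [Fin.ext_iff, hit, le_iff_lt_or_eq]

variable {ε : ℕ → ℝ}

theorem grad_dotProduct_grad_of_le (hε : ∀ t, ε t = 1 ∨ ε t = -1) {t : ℕ} (ht : t ≤ d) :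
    (state d ε t).grad ⬝ᵥ (state d ε t).grad = t / 2 := by
  have hterm : ∀ i : Fin d, (state d ε t).grad i * (state d ε t).grad i
      = if (i : ℕ) < t then 1 / 2 else 0 := by
    intro i
    rw [(state_of_le ε ht).2]
    dsimp only
    split_ifs
    · rcases hε i with h | h <;> rw [h] <;> field_simp <;> norm_num
    · simp
  rw [dotProduct, Finset.sum_congr rfl fun i _ => hterm i, Finset.sum_ite, Finset.sum_const_zero,
    Finset.sum_const, Fin.card_filter_val_lt, min_eq_right ht, nsmul_eq_mul]
  ring

theorem exists_isMoorePenroseInv_of_le (hε : ∀ t, ε t = 1 ∨ ε t = -1) {t : ℕ} (ht : t ≤ d) :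
    ∃ Sd, IsMoorePenroseInv (state d ε t).gram Sd ∧ Sdᵀ = Sd ∧
      (state d ε t).grad ⬝ᵥ Sd *ᵥ (state d ε t).grad = t / 2 := by
  obtain ⟨hS, hh⟩ := state_of_le ε ht
  have hidem : (state d ε t).gram * (state d ε t).gram = (state d ε t).gram := by
    rw [hS, diagonal_mul_diagonal]
    congr 1
    ext i
    split_ifs <;> simp
  have hfix : (state d ε t).gram *ᵥ (state d ε t).grad = (state d ε t).grad := by
    rw [hS, hh]
    ext i
    rw [mulVec_diagonal]
    split_ifs <;> simp
  have hsymm : (state d ε t).gramᵀ = (state d ε t).gram := by rw [hS, diagonal_transpose]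
  exact ⟨_, isMoorePenroseInv_self hidem hsymm, hsymm, by
    rw [hfix, grad_dotProduct_grad_of_le hε ht]⟩

theorem posDef_gram_and_quadForm (hd : 2 ≤ d) (hε : ∀ t, ε t = 1 ∨ ε t = -1) (n : ℕ) :
    (state d ε (d + n)).gram.PosDef ∧
      (state d ε (d + n)).grad ⬝ᵥ (state d ε (d + n)).gram⁻¹ *ᵥ (state d ε (d + n)).grad
        = ((d + n : ℕ) : ℝ) / 2 := by
  induction n with
  | zero =>
    have hS : (state d ε d).gram = 1 := by
      rw [(state_of_le ε le_rfl).1, ← diagonal_one]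
      congr 1
      ext i
      exact if_pos i.2
    rw [add_zero, hS, inv_one, one_mulVec, grad_dotProduct_grad_of_le hε le_rfl]
    exact ⟨PosDef.one, rfl⟩
  | succ n ih =>
    obtain ⟨hS, hq⟩ := ih
    set s := state d ε (d + n)
    obtain ⟨hw, hwh⟩ := orthDir_spec hd s.grad
    have hx : instanceAt (d + n) s = (√(orthDir s.grad ⬝ᵥ s.gram *ᵥ orthDir s.grad))⁻¹ •
        s.gram *ᵥ orthDir s.grad := dif_neg (by omega)
    obtain ⟨hxx, hhx⟩ := hS.dotProduct_inv_mulVec_normalize hw hwh hx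
    have hSt : s.gramᵀ = s.gram := by
      rw [← conjTranspose_eq_transpose_of_trivial]; exact hS.isHermitian
    have hscale : gradScale d (d + n) = 1 := if_neg (by omega)
    have hstep : state d ε (d + (n + 1)) = ⟨s.gram + vecMulVec (instanceAt (d + n) s)
        (instanceAt (d + n) s), s.grad - ε (d + n) • instanceAt (d + n) s⟩ := by
      rw [← add_assoc, state, hscale, one_mul]
    rw [hstep]
    refine ⟨?_, ?_⟩
    · simpa using hS.add_posSemidef (posSemidef_vecMulVec_self_star (instanceAt (d + n) s))
    · rw [dotProduct_inv_add_vecMulVec_self_sub_smul hS.isUnit hSt hxx hhx, hq]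
      rcases hε (d + n) with h | h <;> rw [h] <;> push_cast <;> ring

theorem exists_isMoorePenroseInv (hd : 2 ≤ d) (hε : ∀ t, ε t = 1 ∨ ε t = -1) (T : ℕ) :
    ∃ Sd, IsMoorePenroseInv (state d ε T).gram Sd ∧ Sdᵀ = Sd ∧
      (state d ε T).grad ⬝ᵥ Sd *ᵥ (state d ε T).grad = T / 2 := by
  rcases le_total T d with hT | hT
  · exact exists_isMoorePenroseInv_of_le hε hT
  · obtain ⟨n, rfl⟩ := Nat.exists_eq_add_of_le hT
    obtain ⟨hS, hq⟩ := posDef_gram_and_quadForm hd hε n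
    have hSt : (state d ε (d + n)).gramᵀ = (state d ε (d + n)).gram := by
      rw [← conjTranspose_eq_transpose_of_trivial]; exact hS.isHermitian
    exact ⟨_, isMoorePenroseInv_inv hS.isUnit, by rw [transpose_nonsing_inv, hSt], hq⟩

theorem gradScale_mul_mem {t : ℕ} {e : ℝ} (he : e = 1 ∨ e = -1) :
    (t < d → gradScale d t * e = 1 / √2 ∨ gradScale d t * e = -(1 / √2)) ∧
      (d ≤ t → gradScale d t * e = 1 ∨ gradScale d t * e = -1) := by
  refine ⟨fun ht => ?_, fun ht => ?_⟩
  · rw [gradScale, if_pos ht]; rcases he with rfl | rfl <;> simp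
  · rw [gradScale, if_neg (not_lt.2 ht)]; rcases he with rfl | rfl <;> simp

variable {T : ℕ}

variable (d) in
noncomputable def prediction (W : Fin T → (Fin T → Fin d → ℝ) → (Fin T → ℝ) → Fin d → ℝ)
    (ε : ℕ → ℝ) (t : ℕ) : ℝ :=
  if ht : t < T then
    inst d ε t ⬝ᵥ W ⟨t, ht⟩ (fun s => inst d ε s) (fun s => gradScale d s * ε s)
  else 0

theorem prediction_congr {W : Fin T → (Fin T → Fin d → ℝ) → (Fin T → ℝ) → Fin d → ℝ}
    (hW : ∀ (t : Fin T) (x x' : Fin T → Fin d → ℝ) (g g' : Fin T → ℝ),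
      (∀ q ≤ t, x q = x' q) → (∀ q < t, g q = g' q) → W t x g = W t x' g')
    {ε ε' : ℕ → ℝ} {t : ℕ} (h : ∀ q < t, ε q = ε' q) :
    prediction d W ε t = prediction d W ε' t := by
  unfold prediction
  split_ifs with ht
  · rw [inst_congr h, hW ⟨t, ht⟩ _ _ _ _
      (fun q hq => inst_congr fun r hr => h r (lt_of_lt_of_le hr hq))
      (fun q hq => by rw [h q hq])]
  · rfl

end ScaleInvariantAdversary

open ScaleInvariantAdversary in
/-- Theorem 2 (lower bound for full scale invariance): for any online algorithm `W`
(whose weight vector at trial `t` depends only on the instances up to trial `t` and the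
gradients before trial `t`) there is an adversarial sequence of instances and gradients,
with gradients in `{±1/√2}` for the first `d` trials and in `{±1}` afterwards, whose sign
matches the sign of the algorithm's prediction (so the algorithm's loss is nonnegative in
every trial), such that `h_Tᵀ S_T† h_T = T/2`; consequently the comparator
`u = β √(2/T) S_T† h_T` satisfies `‖u‖_{S_T} = β` and the (linearized) regret is at least
`‖u‖_{S_T} √(T/2)`. -/
theorem stmt_18 (d T : ℕ) (hd : 2 ≤ d) (hT : 1 ≤ T) (β : ℝ) (hβ : 0 ≤ β)
    (W : Fin T → (Fin T → Fin d → ℝ) → (Fin T → ℝ) → Fin d → ℝ)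
    (hW : ∀ (t : Fin T) (x x' : Fin T → Fin d → ℝ) (g g' : Fin T → ℝ),
      (∀ q ≤ t, x q = x' q) → (∀ q < t, g q = g' q) → W t x g = W t x' g') :
    ∃ (x : Fin T → Fin d → ℝ) (g : Fin T → ℝ),
      (∀ t : Fin T, (t.1 < d → g t = 1 / Real.sqrt 2 ∨ g t = -(1 / Real.sqrt 2)) ∧
        (d ≤ t.1 → g t = 1 ∨ g t = -1)) ∧
      (∀ t : Fin T, 0 ≤ g t * (x t ⬝ᵥ W t x g)) ∧
      ∃ Sd : Matrix (Fin d) (Fin d) ℝ,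
        IsMoorePenroseInv (∑ t, vecMulVec (x t) (x t)) Sd ∧
        (-∑ t, g t • x t) ⬝ᵥ Sd.mulVec (-∑ t, g t • x t) = T / 2 ∧
        ∀ u : Fin d → ℝ,
          u = (β * Real.sqrt (2 / T)) • Sd.mulVec (-∑ t, g t • x t) →
          Real.sqrt (u ⬝ᵥ (∑ t, vecMulVec (x t) (x t)).mulVec u) = β ∧
          ∑ t, g t * (x t ⬝ᵥ (W t x g - u)) ≥
            Real.sqrt (u ⬝ᵥ (∑ t, vecMulVec (x t) (x t)).mulVec u) * Real.sqrt (T / 2) := by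
  set ε := causalFix fun t ε => signOrOne (prediction d W ε t)
  have hfix : ∀ t, ε t = signOrOne (prediction d W ε t) :=
    causalFix_eq fun t ε ε' h => by rw [prediction_congr hW h]
  have hε : ∀ t, ε t = 1 ∨ ε t = -1 := fun t => hfix t ▸ signOrOne_eq_one_or _
  set x : Fin T → Fin d → ℝ := fun t => inst d ε t
  set g : Fin T → ℝ := fun t => gradScale d t * ε t
  have hgain : ∀ t : Fin T, 0 ≤ g t * (x t ⬝ᵥ W t x g) := fun t => by
    have hpred : prediction d W ε t = x t ⬝ᵥ W t x g := dif_pos t.2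
    have hscale : 0 ≤ gradScale d t := by unfold gradScale; split_ifs <;> positivity
    rw [show g t = gradScale d t * ε t from rfl, hfix, hpred, mul_assoc]
    exact mul_nonneg hscale (signOrOne_mul_self_nonneg _)
  have hS : ∑ t, vecMulVec (x t) (x t) = (state d ε T).gram := by
    rw [gram_state, ← Fin.sum_univ_eq_sum_range (fun q => vecMulVec (inst d ε q) (inst d ε q))]
  have hh : -∑ t, g t • x t = (state d ε T).grad := by
    rw [grad_state, ← Fin.sum_univ_eq_sum_range (fun q => (gradScale d q * ε q) • inst d ε q)]
  obtain ⟨Sd, hMP, hSdt, hq⟩ := exists_isMoorePenroseInv hd hε T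
  refine ⟨x, g, fun t => gradScale_mul_mem (hε t), hgain, Sd, hS ▸ hMP, hh ▸ hq, fun u hu => ?_⟩
  rw [hh] at hu
  obtain ⟨hnorm, hdot⟩ := comparator_of_pinv hMP.2.1 hSdt (by positivity) hβ hq hu
  rw [hS, hnorm, sum_mul_dotProduct_sub, hh, hdot]
  exact ⟨rfl, le_add_of_nonneg_left (Finset.sum_nonneg fun t _ => hgain t)⟩
end
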